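/- arXiv:2011.05044 — 4 statements merged into one kernel-verified Lean document; each statement's English description precedes it below -/
import Mathlib

section
/- If M is a smooth real hypersurface in ℂⁿ admitting some holomorphic coordinate system at p in which the Newton polyhedron of a defining function equals {ξ ∈ ℝ₊ⁿ : ξ_n ≥ 1}, then the Bloom–Graham type of M at p is infinite, i.e., there exist complex submanifolds of codimension one tangent to M at p to arbitrarily high order. -/
open Topology Asymptotics Filter

/-!
Every monomial `z^α z̄^β` with a nonzero coefficient has `α_last + β_last ≥ 1`, since its exponent
lies in the Newton polyhedron `{ξ_last ≥ 1}`. Hence all truncated Taylor polynomials of `r ∘ Φ`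
vanish on the hyperplane `{z_last = 0}`, so `r ∘ Φ` vanishes there to infinite order and the image
of that hyperplane under `Φ` is a complex hypersurface tangent to `M` to every order.
-/

/-- The Newton polyhedron associated to a set `S ⊆ ℤ₊ⁿ⁺¹` of exponents. -/
def NewtonPolyhedron {n : ℕ} (S : Set (Fin n → ℕ)) : Set (Fin n → ℝ) :=
  convexHull ℝ (⋃ γ ∈ S, {ξ : Fin n → ℝ | ∀ j, (γ j : ℝ) ≤ ξ j})

/-- The Bloom–Graham type of the hypersurface `{r = 0} ⊆ ℂⁿ⁺¹` at `p` is infinite: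
for every `m` there is an `n`-dimensional complex submanifold through `p`
(parametrized by a holomorphic immersion `φ`) tangent to `{r = 0}` to order `m`. -/
def BloomGrahamTypeInfinite {n : ℕ} (r : (Fin (n + 1) → ℂ) → ℝ) (p : Fin (n + 1) → ℂ) : Prop :=
  ∀ m : ℕ, ∃ φ : (Fin n → ℂ) → (Fin (n + 1) → ℂ), AnalyticAt ℂ φ 0 ∧ φ 0 = p ∧
    Function.Injective (fderiv ℂ φ 0) ∧
    (fun z => r (φ z)) =O[𝓝 0] fun z : Fin n → ℂ => ‖z‖ ^ m

section HyperplaneEmbedding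

variable (𝕜 : Type*) [NormedField 𝕜] (n : ℕ)

/-- The embedding `z ↦ (z, 0)` of `𝕜ⁿ` onto the hyperplane `{z_last = 0}` of `𝕜ⁿ⁺¹`. -/
noncomputable def hyperplaneEmbedding : (Fin n → 𝕜) →L[𝕜] (Fin (n + 1) → 𝕜) :=
  ContinuousLinearMap.pi (Fin.lastCases 0 ContinuousLinearMap.proj)

variable {𝕜 n}

@[simp]
lemma hyperplaneEmbedding_castSucc (z : Fin n → 𝕜) (j : Fin n) :
    hyperplaneEmbedding 𝕜 n z j.castSucc = z j := by
  simp [hyperplaneEmbedding]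

@[simp]
lemma hyperplaneEmbedding_last (z : Fin n → 𝕜) : hyperplaneEmbedding 𝕜 n z (Fin.last n) = 0 := by
  simp [hyperplaneEmbedding]

lemma norm_hyperplaneEmbedding_le (z : Fin n → 𝕜) : ‖hyperplaneEmbedding 𝕜 n z‖ ≤ ‖z‖ := by
  refine (pi_norm_le_iff_of_nonneg (norm_nonneg z)).2 fun i => ?_
  induction i using Fin.lastCases with
  | last => simp
  | cast j => simpa using norm_le_pi_norm z j

lemma hyperplaneEmbedding_injective : Function.Injective (hyperplaneEmbedding 𝕜 n) :=
  fun x y h => funext fun j => by simpa using congrFun h j.castSucc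

end HyperplaneEmbedding

lemma cast_mem_newtonPolyhedron {k : ℕ} {S : Set (Fin k → ℕ)} {γ : Fin k → ℕ} (hγ : γ ∈ S) :
    (fun j => (γ j : ℝ)) ∈ NewtonPolyhedron S :=
  subset_convexHull ℝ _ (Set.mem_biUnion hγ fun _ => le_rfl)

lemma one_le_of_newtonPolyhedron_subset {k : ℕ} {S : Set (Fin k → ℕ)} {i : Fin k}
    (hS : NewtonPolyhedron S ⊆ {ξ | 1 ≤ ξ i}) {γ : Fin k → ℕ} (hγ : γ ∈ S) : 1 ≤ γ i :=
  Nat.one_le_cast (α := ℝ) |>.1 (hS (cast_mem_newtonPolyhedron hγ))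

noncomputable def truncatedSeries {k : ℕ} (c : (Fin k → ℕ) → (Fin k → ℕ) → ℂ) (N : ℕ)
    (z : Fin k → ℂ) : ℂ :=
  ∑ α ∈ Finset.Iic ((fun _ => N) : Fin k → ℕ),
    ∑ β ∈ Finset.Iic ((fun _ => N) : Fin k → ℕ),
      if (∑ j, (α j + β j)) < N then
        c α β * (∏ j, z j ^ α j) * ∏ j, (starRingEnd ℂ) (z j) ^ β j
      else 0

lemma prod_pow_mul_prod_conj_pow_eq_zero {k : ℕ} {z : Fin k → ℂ} {i : Fin k} (hz : z i = 0) {α β : Fin k → ℕ}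
    (hαβ : 1 ≤ α i + β i) :
    (∏ j, z j ^ α j) * ∏ j, (starRingEnd ℂ) (z j) ^ β j = 0 := by
  rcases Nat.eq_zero_or_pos (α i) with hα | hα
  · refine mul_eq_zero_of_right _ (Finset.prod_eq_zero (Finset.mem_univ i) ?_)
    simp [hz, zero_pow (by omega : β i ≠ 0)]
  · refine mul_eq_zero_of_left (Finset.prod_eq_zero (Finset.mem_univ i) ?_) _
    simp [hz, zero_pow hα.ne']

lemma truncatedSeries_eq_zero {k : ℕ} {c : (Fin k → ℕ) → (Fin k → ℕ) → ℂ} {i : Fin k}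
    (hc : ∀ α β, c α β ≠ 0 → 1 ≤ α i + β i) (N : ℕ) {z : Fin k → ℂ} (hz : z i = 0) :
    truncatedSeries c N z = 0 := by
  refine Finset.sum_eq_zero fun α _ => Finset.sum_eq_zero fun β _ => ?_
  split_ifs
  · by_cases hcαβ : c α β = 0
    · simp [hcαβ]
    · rw [mul_assoc, prod_pow_mul_prod_conj_pow_eq_zero hz (hc α β hcαβ), mul_zero]
  · rfl

theorem statement2_general {n : ℕ} (r : (Fin (n + 1) → ℂ) → ℝ) (p : Fin (n + 1) → ℂ)
    (hcoord : ∃ Φ : (Fin (n + 1) → ℂ) → (Fin (n + 1) → ℂ),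
      AnalyticAt ℂ Φ 0 ∧ Φ 0 = p ∧ Function.Bijective (fderiv ℂ Φ 0) ∧
      ∃ c : (Fin (n + 1) → ℕ) → (Fin (n + 1) → ℕ) → ℂ,
        (∀ N : ℕ,
          (fun z : Fin (n + 1) → ℂ => ((r (Φ z) : ℝ) : ℂ) -
            ∑ α ∈ Finset.Iic ((fun _ => N) : Fin (n + 1) → ℕ),
              ∑ β ∈ Finset.Iic ((fun _ => N) : Fin (n + 1) → ℕ),
                if (∑ j, (α j + β j)) < N then
                  c α β * (∏ j, z j ^ α j) * ∏ j, (starRingEnd ℂ) (z j) ^ β j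
                else 0)
            =O[𝓝 0] fun z => ‖z‖ ^ N) ∧
        NewtonPolyhedron {γ | ∃ α β, c α β ≠ 0 ∧ γ = α + β} =
          {ξ : Fin (n + 1) → ℝ | (∀ j, 0 ≤ ξ j) ∧ 1 ≤ ξ (Fin.last n)}) :
    BloomGrahamTypeInfinite r p := by
  obtain ⟨Φ, hΦ, hΦp, hΦ', c, hTaylor, hNP⟩ := hcoord
  set ι := hyperplaneEmbedding ℂ n
  have hc : ∀ α β, c α β ≠ 0 → 1 ≤ α (Fin.last n) + β (Fin.last n) := fun α β hcαβ =>
    one_le_of_newtonPolyhedron_subset (hNP.subset.trans fun _ hξ => hξ.2) ⟨α, β, hcαβ, rfl⟩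
  have hΦι : AnalyticAt ℂ Φ (ι 0) := by rwa [map_zero]
  intro m
  refine ⟨Φ ∘ ι, hΦι.comp (ι.analyticAt 0), by simpa using hΦp, ?_, ?_⟩
  · rw [fderiv_comp 0 hΦι.differentiableAt ι.differentiableAt, ι.fderiv, map_zero,
      ContinuousLinearMap.coe_comp]
    exact hΦ'.1.comp hyperplaneEmbedding_injective
  · have hrestrict : (fun z => ((r (Φ (ι z)) : ℝ) : ℂ)) =O[𝓝 0] fun z => ‖ι z‖ ^ m := by
      refine ((hTaylor m).comp_tendsto ?_).congr_left fun z => ?_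
      · simpa using ι.continuous.tendsto 0
      · change _ - truncatedSeries c m (ι z) = _
        rw [truncatedSeries_eq_zero hc m (hyperplaneEmbedding_last z), sub_zero]
    have hnorm : (fun z => ‖ι z‖ ^ m) =O[𝓝 0] fun z : Fin n → ℂ => ‖z‖ ^ m :=
      isBigO_of_le _ fun z => by
        simpa using pow_le_pow_left₀ (norm_nonneg _) (norm_hyperplaneEmbedding_le z) m
    exact ((isBigO_norm_left.2 (hrestrict.trans hnorm)).congr_left
      fun z => Complex.norm_real _).of_norm_left

/-- If a smooth real hypersurface `M = {r = 0} ⊆ ℂⁿ⁺¹` admits a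
holomorphic coordinate system at `p` (a local biholomorphism `Φ` with `Φ 0 = p`) in which
the Newton polyhedron of the defining function `r ∘ Φ` equals
`{ξ ∈ ℝ₊ⁿ⁺¹ : ξ_last ≥ 1}`, then the Bloom–Graham type of `M` at `p` is infinite. -/
theorem statement2 {n : ℕ} (r : (Fin (n + 1) → ℂ) → ℝ) (p : Fin (n + 1) → ℂ)
    (hr : ContDiff ℝ (⊤ : ℕ∞) r) (hrp : r p = 0) (hgrad : fderiv ℝ r p ≠ 0)
    (hcoord : ∃ Φ : (Fin (n + 1) → ℂ) → (Fin (n + 1) → ℂ),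
      AnalyticAt ℂ Φ 0 ∧ Φ 0 = p ∧ Function.Bijective (fderiv ℂ Φ 0) ∧
      ∃ c : (Fin (n + 1) → ℕ) → (Fin (n + 1) → ℕ) → ℂ,
        (∀ N : ℕ,
          (fun z : Fin (n + 1) → ℂ => ((r (Φ z) : ℝ) : ℂ) -
            ∑ α ∈ Finset.Iic ((fun _ => N) : Fin (n + 1) → ℕ),
              ∑ β ∈ Finset.Iic ((fun _ => N) : Fin (n + 1) → ℕ),
                if (∑ j, (α j + β j)) < N then
                  c α β * (∏ j, z j ^ α j) * ∏ j, (starRingEnd ℂ) (z j) ^ β j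
                else 0)
            =O[𝓝 0] fun z => ‖z‖ ^ N) ∧
        NewtonPolyhedron {γ | ∃ α β, c α β ≠ 0 ∧ γ = α + β} =
          {ξ : Fin (n + 1) → ℝ | (∀ j, 0 ≤ ξ j) ∧ 1 ≤ ξ (Fin.last n)}) :
    BloomGrahamTypeInfinite r p :=
  statement2_general r p hcoord
end

section
/- Let M ⊂ ℂ² be defined by 2Re(w) + F(z,z̄) = 0 with F smooth, F(0)=0, ∇F(0)=0, and suppose Δ₁(M,0) = ∞, so the Taylor series of F is 2∑_{j≥2} Re(c_j z^j) with associated formal power series S(z) = ∑_{j≥2} c_j z^j. If the convergence radius of S is positive, then there exists a holomorphic change of coordinate w* = w − S(z) in which M is defined by 2Re(w*) + F*(z,z̄) = 0 with F* flat at the origin (all derivatives of F* vanish at 0). -/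
open Topology Asymptotics Filter

/-- `f` vanishes to order at least `k` at `0 ∈ ℂ`. -/
def ordGE {E : Type*} [NormedAddCommGroup E] (f : ℂ → E) (k : ℕ) : Prop :=
  f =O[𝓝 0] fun t : ℂ => t ^ k

/-- The D'Angelo type `Δ₁({r = 0}, p)` is infinite. -/
def DAngeloTypeInfinite {E : Type*} [NormedAddCommGroup E] [NormedSpace ℂ E]
    (r : E → ℝ) (p : E) : Prop :=
  ∀ C : ℕ, ∃ γ : ℂ → E, AnalyticAt ℂ γ 0 ∧ γ 0 = p ∧
    ¬ (∀ᶠ t in 𝓝 (0 : ℂ), γ t = p) ∧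
    ∃ m : ℕ, 1 ≤ m ∧ ¬ ordGE (fun t => γ t - p) (m + 1) ∧
      ordGE (fun t => r (γ t)) (C * m)

/-!
Let `S` be the sum of the convergent series `∑ c_j z^j`. Comparing the Taylor hypothesis on `F`
with the expansion of `S` shows that the smooth function `F - 2 Re S` is `O(‖z‖^M)` for every `M`.
Such flatness passes to the derivative: at a point `z` with `‖z‖ = r`, the derivative is bounded
by the size of the function on the ball of radius `r^(M+1)` around `z` divided by that radius,
plus the Lipschitz constant of the derivative times the radius, which is `O(r^M)`. Hence every
iterated derivative is flat, and in particular vanishes at the origin.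
-/

open Metric
open scoped NNReal ContDiff

variable {E G : Type*} [NormedAddCommGroup E] [NormedAddCommGroup G]

def IsFlatAt (f : E → G) (a : E) : Prop :=
  ∀ M : ℕ, f =O[𝓝 a] fun x => ‖x - a‖ ^ M

theorem IsFlatAt.eq_zero {f : E → G} {a : E} (h : IsFlatAt f a) : f a = 0 :=
  (h 1).eq_zero_of_norm_pow one_ne_zero

theorem IsFlatAt.of_isBigO {H : Type*} [NormedAddCommGroup H] {f : E → G} {g : E → H} {a : E}
    (h : IsFlatAt f a) (hg : g =O[𝓝 a] f) : IsFlatAt g a :=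
  fun M => hg.trans (h M)

variable [NormedSpace ℝ E] [NormedSpace ℝ G]

theorem norm_fderiv_le_of_lipschitzOnWith {f : E → G} {f' : E → E →L[ℝ] G} {x : E}
    {h B : ℝ} {K : ℝ≥0} (hh : 0 < h) (hf : ∀ y ∈ ball x h, HasFDerivAt f (f' y) y)
    (hK : LipschitzOnWith K f' (ball x h)) (hB : ∀ y ∈ ball x h, ‖f y‖ ≤ B) :
    ‖f' x‖ ≤ 4 * B / h + K * h := by
  have hxx : x ∈ ball x h := mem_ball_self hh
  have hB0 : 0 ≤ B := (norm_nonneg _).trans (hB x hxx)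
  have hlin : ∀ y ∈ ball x h, ‖f y - f x - f' x (y - x)‖ ≤ K * h * ‖y - x‖ := by
    intro y hy
    refine (convex_ball x h).norm_image_sub_le_of_norm_hasFDerivWithin_le'
      (fun z hz => (hf z hz).hasFDerivWithinAt) (fun z hz => ?_) hxx hy
    calc ‖f' z - f' x‖ ≤ K * ‖z - x‖ := by simpa [dist_eq_norm] using hK.dist_le_mul z hz x hxx
      _ ≤ K * h := by gcongr; exact (mem_ball_iff_norm.mp hz).le
  refine (f' x).opNorm_le_of_shell hh (by positivity) (c := (2 : ℝ)) (by norm_num)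
    fun u hu₁ hu₂ => ?_
  have hu : x + u ∈ ball x h := by simpa [mem_ball_iff_norm] using hu₂
  rw [Real.norm_two, div_le_iff₀' two_pos] at hu₁
  have key := hlin (x + u) hu
  simp only [add_sub_cancel_left] at key
  calc ‖f' x u‖ ≤ ‖f (x + u)‖ + ‖f x‖ + ‖f (x + u) - f x - f' x u‖ := by
        have := norm_sub_le (f (x + u) - f x) (f (x + u) - f x - f' x u)
        have := norm_sub_le (f (x + u)) (f x)
        simp only [sub_sub_cancel] at *
        linarith
    _ ≤ B + B + K * h * ‖u‖ := by gcongr <;> apply hB <;> assumption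
    _ ≤ (4 * B / h + K * h) * ‖u‖ := by
        have : 2 * B ≤ 4 * B * ‖u‖ / h := by rw [le_div_iff₀ hh]; nlinarith
        rw [add_mul, div_mul_eq_mul_div]
        linarith

namespace IsFlatAt

variable {f : E → G} {a : E}

theorem hasFDerivAt_zero (h : IsFlatAt f a) : HasFDerivAt f (0 : E →L[ℝ] G) a :=
  (h 2).hasFDerivAt one_lt_two

theorem fderiv (hf : ContDiffAt ℝ 2 f a) (h : IsFlatAt f a) : IsFlatAt (fderiv ℝ f) a := by
  intro M
  obtain ⟨C, hC₀, hC⟩ := (h (2 * M + 1)).exists_pos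
  obtain ⟨K, t, ht, hK⟩ := (hf.fderiv_right (m := 1) (by norm_num)).exists_lipschitzOnWith
  have hderiv : ∀ᶠ y in 𝓝 a, HasFDerivAt f (_root_.fderiv ℝ f y) y :=
    (hf.eventually (by simp)).mono fun y hy => (hy.differentiableAt (by norm_num)).hasFDerivAt
  obtain ⟨δ, hδ, hball⟩ := eventually_nhds_iff_ball.mp (hC.bound.and (hderiv.and ht))
  -- On the ball of radius `h = r ^ (M + 1)` around `y`, `‖f‖ ≤ C (2r) ^ (2M + 1)`, so the bound
  -- `4B/h + K h` of `norm_fderiv_le_of_lipschitzOnWith` is `O(r ^ M)`.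
  refine IsBigO.of_bound (4 * C * 2 ^ (2 * M + 1) + K) ?_
  filter_upwards [ball_mem_nhds a (show 0 < min (δ / 2) 1 by positivity)] with y hy
  rcases eq_or_ne y a with rfl | hya
  · simp only [h.hasFDerivAt_zero.fderiv, norm_zero]
    positivity
  set r := ‖y - a‖
  have hr : 0 < r := norm_pos_iff.mpr (sub_ne_zero.mpr hya)
  have hry : r < min (δ / 2) 1 := mem_ball_iff_norm.mp hy
  have hr₁ : r ≤ 1 := hry.le.trans (min_le_right _ _)
  have hrδ : 2 * r < δ := by linarith [min_le_left (δ / 2) 1]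
  have hh : r ^ (M + 1) ≤ r := pow_le_of_le_one hr.le hr₁ (by omega)
  have hnear : ∀ z ∈ ball y (r ^ (M + 1)), ‖z - a‖ < 2 * r := fun z hz => by
    have := norm_sub_le_norm_sub_add_norm_sub z y a
    rw [mem_ball_iff_norm] at hz
    linarith
  have hsub : ball y (r ^ (M + 1)) ⊆ ball a δ := fun z hz =>
    mem_ball_iff_norm.mpr ((hnear z hz).trans hrδ)
  have hbound := norm_fderiv_le_of_lipschitzOnWith (pow_pos hr (M + 1))
    (fun z hz => (hball z (hsub hz)).2.1) (hK.mono fun z hz => (hball z (hsub hz)).2.2)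
    (B := C * (2 * r) ^ (2 * M + 1)) fun z hz => by
      refine (hball z (hsub hz)).1.trans ?_
      rw [norm_pow, norm_norm]
      gcongr
      exact (hnear z hz).le
  calc ‖_root_.fderiv ℝ f y‖
      ≤ 4 * (C * (2 * r) ^ (2 * M + 1)) / r ^ (M + 1) + K * r ^ (M + 1) := hbound
    _ = (4 * C * 2 ^ (2 * M + 1) + K * r) * r ^ M := by
        field_simp
        ring
    _ ≤ (4 * C * 2 ^ (2 * M + 1) + K) * ‖r ^ M‖ := by
        rw [norm_pow, norm_norm]
        gcongr
        exact mul_le_of_le_one_right K.2 hr₁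

theorem iteratedFDeriv (hf : ContDiffAt ℝ ∞ f a) (h : IsFlatAt f a) (n : ℕ) :
    IsFlatAt (iteratedFDeriv ℝ n f) a := by
  induction n with
  | zero =>
    rw [iteratedFDeriv_zero_eq_comp]
    exact h.of_isBigO (isBigO_of_le _ fun x => (LinearIsometryEquiv.norm_map _ _).le)
  | succ n ih =>
    have hsmooth : ContDiffAt ℝ 2 (_root_.iteratedFDeriv ℝ n f) a :=
      hf.iteratedFDeriv_right (WithTop.coe_le_coe.mpr le_top)
    rw [iteratedFDeriv_succ_eq_comp_left]
    exact (ih.fderiv hsmooth).of_isBigO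
      (isBigO_of_le _ fun x => (LinearIsometryEquiv.norm_map _ _).le)

theorem iteratedFDeriv_eq_zero (hf : ContDiffAt ℝ ∞ f a) (h : IsFlatAt f a) (n : ℕ) :
    _root_.iteratedFDeriv ℝ n f a = 0 :=
  (h.iteratedFDeriv hf n).eq_zero

end IsFlatAt

open FormalMultilinearSeries

theorem FormalMultilinearSeries.le_radius_ofScalars_of_summable {𝕜 : Type*}
    [NontriviallyNormedField 𝕜] {c : ℕ → 𝕜} {z : 𝕜} (hz : Summable fun n => c n * z ^ n) :
    (‖z‖₊ : ENNReal) ≤ (ofScalars 𝕜 c).radius :=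
  (ofScalars 𝕜 c).le_radius_of_tendsto (l := 0) <| by
    simpa [ofScalars_norm, norm_mul, norm_pow] using hz.tendsto_atTop_zero.norm

theorem isFlatAt_sub_two_mul_re {F : ℂ → ℝ} {S : ℂ → ℂ} {c : ℕ → ℂ}
    (hS : HasFPowerSeriesAt S (ofScalars ℂ c) 0)
    (hTaylor : ∀ N : ℕ, (fun z : ℂ => F z - ∑ j ∈ Finset.range N, 2 * (c j * z ^ j).re)
      =O[𝓝 0] fun z => z ^ N) :
    IsFlatAt (fun z => F z - 2 * (S z).re) 0 := by
  simp only [IsFlatAt, sub_zero]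
  intro M
  have hS' : (fun z => S z - ∑ j ∈ Finset.range M, c j * z ^ j) =O[𝓝 0] fun z => ‖z‖ ^ M := by
    simpa only [partialSum, ofScalars_apply_eq, smul_eq_mul, zero_add] using
      hS.isBigO_sub_partialSum_pow M
  have hre : (fun z => 2 * (S z - ∑ j ∈ Finset.range M, c j * z ^ j).re)
      =O[𝓝 0] fun z => ‖z‖ ^ M :=
    ((Complex.reCLM.isBigO_comp _ _).const_mul_left 2).trans hS'
  have hF := (hTaylor M).norm_right
  simp only [norm_pow] at hF
  refine (hF.sub hre).congr_left fun z => ?_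
  simp only [Complex.sub_re, Complex.re_sum, mul_sub, Finset.mul_sum]
  ring

theorem statement6_general (F : ℂ → ℝ)
    (hF : ContDiff ℝ (⊤ : ℕ∞) F)
    (c : ℕ → ℂ) (hc0 : c 0 = 0)
    (hTaylor : ∀ N : ℕ,
      (fun z : ℂ => F z - ∑ j ∈ Finset.range N, 2 * (c j * z ^ j).re)
        =O[𝓝 0] fun z => z ^ N)
    (hrad : ∃ R : ℝ, 0 < R ∧ ∀ z : ℂ, ‖z‖ < R → Summable fun j => c j * z ^ j) :
    ∃ S : ℂ → ℂ, AnalyticAt ℂ S 0 ∧ S 0 = 0 ∧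
      (∀ᶠ z in 𝓝 (0 : ℂ), S z = ∑' j, c j * z ^ j) ∧
      (∀ N : ℕ, iteratedFDeriv ℝ N (fun z : ℂ => F z - 2 * (S z).re) 0 = 0) ∧
      (∀ z w : ℂ, 2 * w.re + F z = 2 * (w + S z).re + (F z - 2 * (S z).re)) := by
  obtain ⟨R, hR, hsum⟩ := hrad
  obtain ⟨z₀, hz₀, hz₀R⟩ := NormedField.exists_norm_lt ℂ hR
  have hradius : 0 < (ofScalars ℂ c).radius :=
    lt_of_lt_of_le (by simpa using hz₀) (le_radius_ofScalars_of_summable (hsum z₀ hz₀R))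
  let S : ℂ → ℂ := ofScalarsSum c
  have hS : HasFPowerSeriesAt S (ofScalars ℂ c) 0 :=
    ((ofScalars ℂ c).hasFPowerSeriesOnBall hradius).hasFPowerSeriesAt
  have hsmooth : ContDiffAt ℝ ∞ (fun z => F z - 2 * (S z).re) 0 :=
    hF.contDiffAt.sub <| contDiffAt_const.mul <|
      Complex.reCLM.contDiff.contDiffAt.comp 0 hS.analyticAt.restrictScalars.contDiffAt
  refine ⟨S, hS.analyticAt, by simp [S, hc0], .of_forall fun z => ?_,
    (isFlatAt_sub_two_mul_re hS hTaylor).iteratedFDeriv_eq_zero hsmooth, fun z w => ?_⟩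
  · simp [S, ofScalars_sum_eq]
  · simp only [Complex.add_re]
    ring

/-- Let `M ⊆ ℂ²` be defined by `2 Re w + F(z,z̄) = 0` with
`Δ₁(M,0) = ∞`, so that the Taylor series of `F` is `2∑_{j≥2} Re (c_j z^j)`, with
associated formal power series `S(z) = ∑_{j≥2} c_j z^j`.  If the radius of convergence
of `S` is positive, then `S` defines a holomorphic function near `0`, the function
`F*(z) = F(z) − 2 Re S(z)` is flat at the origin, and in the holomorphic coordinate
`w* = w − (−S(z))` the hypersurface `M` is defined by `2 Re w* + F*(z,z̄) = 0`. -/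
theorem statement6 (F : ℂ → ℝ)
    (hF : ContDiff ℝ (⊤ : ℕ∞) F) (hF0 : F 0 = 0) (hdF : fderiv ℝ F 0 = 0)
    (hΔ : DAngeloTypeInfinite (fun q : ℂ × ℂ => 2 * q.2.re + F q.1) 0)
    (c : ℕ → ℂ) (hc0 : c 0 = 0) (hc1 : c 1 = 0)
    (hTaylor : ∀ N : ℕ,
      (fun z : ℂ => F z - ∑ j ∈ Finset.range N, 2 * (c j * z ^ j).re)
        =O[𝓝 0] fun z => z ^ N)
    (hrad : ∃ R : ℝ, 0 < R ∧ ∀ z : ℂ, ‖z‖ < R → Summable fun j => c j * z ^ j) :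
    ∃ S : ℂ → ℂ, AnalyticAt ℂ S 0 ∧ S 0 = 0 ∧
      (∀ᶠ z in 𝓝 (0 : ℂ), S z = ∑' j, c j * z ^ j) ∧
      (∀ N : ℕ, iteratedFDeriv ℝ N (fun z : ℂ => F z - 2 * (S z).re) 0 = 0) ∧
      (∀ z w : ℂ, 2 * w.re + F z = 2 * (w + S z).re + (F z - 2 * (S z).re)) :=
  statement6_general F hF c hc0 hTaylor hrad
end

section
/- Let M ⊂ ℂ² be defined by r = 2Re(w) + F(z,z̄) = 0 with Δ₁(M,0) = ∞ and formal series S(z) = ∑_{j≥2} c_j z^j as above. If there exists a regular holomorphic curve γ(t) = (t, −h(t)), with h holomorphic near 0 and h(0)=0, tangent to M at 0 to infinite order, then the Taylor coefficients of h equal the c_j, hence S converges on a neighborhood of 0 and S = h there. -/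
/-!
Subtracting the pure-terms expansion of `F` from the tangency condition gives
`Re (∑_{k<N} c_k t^k - h t) = O(t^N)` for every `N`, and the function inside `Re` is holomorphic.
For a holomorphic `g` with `g 0 = 0`, the real part alone already controls the order of vanishing:
if `g = t^m g₁` with `g₁ 0 ≠ 0`, then `Re g` has exact order `m` along a suitable ray. Hence `h`
agrees with the partial sums of `S` to every order, which pins down its Taylor coefficients, and
its Taylor series converges to it near `0`.
-/

open Topology Asymptotics Filter

theorem natCast_le_analyticOrderAt_of_re_isBigO {g : ℂ → ℂ} (hg : AnalyticAt ℂ g 0)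
    (hg0 : g 0 = 0) {N : ℕ} (hO : (fun t => (g t).re) =O[𝓝 0] fun t => t ^ N) :
    (N : ℕ∞) ≤ analyticOrderAt g 0 := by
  by_contra! hlt
  obtain ⟨m, hm⟩ : ∃ m : ℕ, analyticOrderAt g 0 = m :=
    ⟨_, (ENat.natCast_toNat (hlt.trans (ENat.natCast_lt_top N)).ne).symm⟩
  have hmN : m < N := by exact_mod_cast hm ▸ hlt
  have hm0 : m ≠ 0 := by
    rintro rfl
    exact (hg.analyticOrderAt_ne_zero.mpr hg0) hm
  obtain ⟨g₁, hg₁, hg₁0, hfac⟩ := hg.analyticOrderAt_eq_natCast.mp hm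
  obtain ⟨ω, hω⟩ := IsAlgClosed.exists_pow_nat_eq (starRingEnd ℂ (g₁ 0)) (Nat.pos_of_ne_zero hm0)
  have hray : Tendsto (fun x : ℝ => ω * x) (𝓝 0) (𝓝 0) := by
    simpa using (Complex.continuous_ofReal.tendsto 0).const_mul ω
  -- Along the ray `ω ℝ` the leading term `(ω x)^m g₁ 0` of `g` is `x^m |g₁ 0|^2`, which is real and
  -- positive, so `Re g` is not `o(x^m)` there.
  have hratio : Tendsto (fun x : ℝ => (g (ω * x)).re / x ^ m) (𝓝[≠] 0)
      (𝓝 (Complex.normSq (g₁ 0))) := by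
    have hlim : Tendsto (fun x : ℝ => (ω ^ m * g₁ (ω * x)).re) (𝓝 0)
        (𝓝 (Complex.normSq (g₁ 0))) := by
      have hval : (ω ^ m * g₁ 0).re = Complex.normSq (g₁ 0) := by
        rw [hω, Complex.conj_mul', ← Complex.ofReal_pow, Complex.ofReal_re,
          Complex.normSq_eq_norm_sq]
      exact hval ▸ (Complex.continuous_re.tendsto _).comp
        ((hg₁.continuousAt.tendsto.comp hray).const_mul (ω ^ m))
    refine (hlim.mono_left nhdsWithin_le_nhds).congr' ?_
    filter_upwards [(hray.eventually hfac).filter_mono nhdsWithin_le_nhds,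
      self_mem_nhdsWithin] with x hx hx0
    have hsplit : (ω * x) ^ m * g₁ (ω * x) = ((x ^ m : ℝ) : ℂ) * (ω ^ m * g₁ (ω * x)) := by
      push_cast
      ring
    rw [hx, smul_eq_mul, sub_zero, hsplit, Complex.re_ofReal_mul,
      mul_div_cancel_left₀ _ (pow_ne_zero _ hx0)]
  have hbig : (fun x : ℝ => x ^ m) =O[𝓝[≠] 0] fun x => (g (ω * x)).re :=
    isBigO_of_div_tendsto_nhds_of_ne_zero hratio (Complex.normSq_pos.mpr hg₁0).ne'
  have hsmall : (fun x : ℝ => (g (ω * x)).re) =o[𝓝 0] fun x => x ^ m := by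
    have hpow : (fun x : ℝ => (ω * x) ^ N) =O[𝓝 0] fun x : ℝ => x ^ N :=
      isBigO_iff.2 ⟨‖ω‖ ^ N, Eventually.of_forall fun x => by simp [mul_pow]⟩
    exact ((hO.comp_tendsto hray).trans hpow).trans_isLittleO (isLittleO_pow_pow hmN)
  refine isLittleO_irrefl ?_ (hbig.trans_isLittleO (hsmall.mono nhdsWithin_le_nhds))
  exact (show ∀ᶠ x in 𝓝[≠] (0 : ℝ), x ^ m ≠ 0 from
    eventually_mem_nhdsWithin.mono fun x hx => pow_ne_zero m hx).frequently

open Finset Nat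

theorem iteratedDeriv_sum_range_mul_pow_zero {𝕜 : Type*} [NontriviallyNormedField 𝕜]
    (c : ℕ → 𝕜) {j N : ℕ} (hj : j < N) :
    iteratedDeriv j (fun t : 𝕜 => ∑ k ∈ range N, c k * t ^ k) 0 = j ! * c j := by
  rw [iteratedDeriv_fun_sum fun k _ => by fun_prop]
  simp only [iteratedDeriv_const_mul_field, iteratedDeriv_fun_pow_zero, cast_ite, cast_zero,
    mul_ite, mul_zero, sum_ite_eq, mem_range, hj, if_true, mul_comm]

theorem iteratedDeriv_eq_factorial_mul_of_re_isBigO {h : ℂ → ℂ} (hh : AnalyticAt ℂ h 0)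
    {c : ℕ → ℂ} (hc0 : c 0 = h 0)
    (hre : ∀ N, (fun t : ℂ => (∑ k ∈ range N, c k * t ^ k - h t).re) =O[𝓝 0] fun t => t ^ N)
    (j : ℕ) : iteratedDeriv j h 0 = j ! * c j := by
  have hP : AnalyticAt ℂ (fun t : ℂ => ∑ k ∈ range (j + 1), c k * t ^ k) 0 := by fun_prop
  have hg0 : ∑ k ∈ range (j + 1), c k * (0 : ℂ) ^ k - h 0 = 0 := by
    rw [sum_eq_single_of_mem 0 (by simp) fun k _ hk => by simp [hk], pow_zero, mul_one,
      hc0, sub_self]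
  have hord := natCast_le_analyticOrderAt_of_re_isBigO (hP.sub hh) hg0 (hre (j + 1))
  have hj := (natCast_le_analyticOrderAt_iff_iteratedDeriv_eq_zero (hP.sub hh)).mp hord j
    (lt_add_one j)
  rw [iteratedDeriv_sub hP.contDiffAt hh.contDiffAt,
    iteratedDeriv_sum_range_mul_pow_zero c (lt_add_one j), sub_eq_zero] at hj
  exact hj.symm

theorem exists_hasSum_of_iteratedDeriv_eq {h : ℂ → ℂ} (hh : AnalyticAt ℂ h 0) {c : ℕ → ℂ}
    (hc : ∀ j, iteratedDeriv j h 0 = j ! * c j) :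
    ∃ ε : ℝ, 0 < ε ∧ ∀ z : ℂ, ‖z‖ < ε → HasSum (fun j => c j * z ^ j) (h z) := by
  obtain ⟨ε, hε, hball⟩ := Metric.eventually_nhds_iff_ball.mp hh.eventually_analyticAt
  refine ⟨ε, hε, fun z hz => ?_⟩
  have hdiff : DifferentiableOn ℂ h (Metric.ball 0 ε) := fun w hw =>
    (hball w hw).differentiableAt.differentiableWithinAt
  refine (Complex.hasSum_taylorSeries_on_ball hdiff (mem_ball_zero_iff.mpr hz)).congr_fun
    fun j => ?_
  have hfac : (j ! : ℂ) ≠ 0 := cast_ne_zero.mpr j.factorial_ne_zero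
  rw [hc, sub_zero, smul_eq_mul, smul_eq_mul]
  field_simp

theorem statement7_general (F : ℂ → ℝ)
    (c : ℕ → ℂ) (hc0 : c 0 = 0)
    (hTaylor : ∀ N : ℕ,
      (fun z : ℂ => F z - ∑ j ∈ Finset.range N, 2 * (c j * z ^ j).re)
        =O[𝓝 0] fun z => z ^ N)
    (h : ℂ → ℂ) (hh : AnalyticAt ℂ h 0) (hh0 : h 0 = 0)
    (htan : ∀ N : ℕ,
      (fun t : ℂ => 2 * (-(h t)).re + F t) =O[𝓝 0] fun t : ℂ => t ^ N) :
    (∀ j : ℕ, iteratedDeriv j h 0 = (Nat.factorial j : ℂ) * c j) ∧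
    ∃ ε : ℝ, 0 < ε ∧ ∀ z : ℂ, ‖z‖ < ε →
      (Summable fun j => c j * z ^ j) ∧ ∑' j, c j * z ^ j = h z := by
  have hre (N : ℕ) :
      (fun t : ℂ => (∑ k ∈ range N, c k * t ^ k - h t).re) =O[𝓝 0] fun t => t ^ N := by
    refine (((htan N).sub (hTaylor N)).const_mul_left (2⁻¹ : ℝ)).congr' ?_ EventuallyEq.rfl
    refine Eventually.of_forall fun t => ?_
    simp only [Complex.sub_re, Complex.neg_re, Complex.re_sum, ← mul_sum]
    ring
  have hcoeff := iteratedDeriv_eq_factorial_mul_of_re_isBigO hh (hc0.trans hh0.symm) hre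
  obtain ⟨ε, hε, hsum⟩ := exists_hasSum_of_iteratedDeriv_eq hh hcoeff
  exact ⟨hcoeff, ε, hε, fun z hz => ⟨(hsum z hz).summable, (hsum z hz).tsum_eq⟩⟩

/-- Let `M ⊆ ℂ²` be defined by `r = 2 Re w + F(z,z̄) = 0` with
`Δ₁(M,0) = ∞` and formal series `S(z) = ∑_{j≥2} c_j z^j` coming from the pure-terms
Taylor expansion of `F`.  If the regular holomorphic curve `γ(t) = (t, −h(t))`
(`h` holomorphic, `h(0) = 0`) is tangent to `M` at `0` to infinite order, then the
Taylor coefficients of `h` equal the `c_j`; hence `S` converges on a neighborhood of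
`0` and `S = h` there. -/
theorem statement7 (F : ℂ → ℝ)
    (hF : ContDiff ℝ (⊤ : ℕ∞) F) (hF0 : F 0 = 0) (hdF : fderiv ℝ F 0 = 0)
    (hΔ : DAngeloTypeInfinite (fun q : ℂ × ℂ => 2 * q.2.re + F q.1) 0)
    (c : ℕ → ℂ) (hc0 : c 0 = 0) (hc1 : c 1 = 0)
    (hTaylor : ∀ N : ℕ,
      (fun z : ℂ => F z - ∑ j ∈ Finset.range N, 2 * (c j * z ^ j).re)
        =O[𝓝 0] fun z => z ^ N)
    (h : ℂ → ℂ) (hh : AnalyticAt ℂ h 0) (hh0 : h 0 = 0)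
    (htan : ∀ N : ℕ,
      (fun t : ℂ => 2 * (-(h t)).re + F t) =O[𝓝 0] fun t : ℂ => t ^ N) :
    (∀ j : ℕ, iteratedDeriv j h 0 = (Nat.factorial j : ℂ) * c j) ∧
    ∃ ε : ℝ, 0 < ε ∧ ∀ z : ℂ, ‖z‖ < ε →
      (Summable fun j => c j * z ^ j) ∧ ∑' j, c j * z ^ j = h z :=
  statement7_general F c hc0 hTaylor h hh hh0 htan
end

section
/- Let M ⊂ ℂ² be defined by 2Re(w) + F(z,z̄) = 0 with Δ₁(M,0) = ∞ and associated formal series S(z) = ∑_{j≥2} c_j z^j from the pure-terms Taylor expansion of F. Then the following are equivalent: (i) there is no nonconstant holomorphic curve tangent to M at 0 to infinite order; (ii) the radius of convergence of S equals 0. -/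
open Topology Asymptotics Filter

/-!
If `S` converges, its sum gives the curve `t ↦ (t, -S t)`, along which `2 Re w + F = F - 2 Re S`
vanishes to infinite order. Conversely, let `(g, h)` be a tangent curve. The holomorphic function
`h + ∑_{j<N} c_j g^j` vanishes at `0` and its real part is `O(t^N)`, hence it is itself `O(t^N)`:
at the first nonzero Taylor coefficient of a holomorphic function, a rotation of `t` makes the real
part as large as the modulus. If `g ≡ 0` this forces `h ≡ 0`. Otherwise a holomorphic change of
variable turns `g` into `s ↦ s^n`, so that `h = -∑ c_j s^(n j)` to infinite order: the `c_j` are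
Taylor coefficients of a holomorphic function, and `S` converges.
-/

section Order

variable {𝕜 E : Type*} [NontriviallyNormedField 𝕜] [NormedAddCommGroup E] [NormedSpace 𝕜 E]
  {f g : 𝕜 → E} {z₀ : 𝕜} {k N : ℕ}

lemma isBigO_sub_pow_sub_pow_of_le {m n : ℕ} (h : m ≤ n) :
    (fun z : 𝕜 => (z - z₀) ^ n) =O[𝓝 z₀] fun z => (z - z₀) ^ m := by
  obtain rfl | hlt := h.eq_or_lt
  · exact isBigO_refl _ _
  · exact (isLittleO_pow_pow hlt).isBigO.comp_tendsto (tendsto_sub_nhds_zero_iff.mpr tendsto_id)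

lemma eq_zero_of_pow_smul_isBigO_pow_succ (hg : ContinuousAt g z₀)
    (h : (fun z => (z - z₀) ^ k • g z) =O[𝓝 z₀] fun z => (z - z₀) ^ (k + 1)) : g z₀ = 0 := by
  have hg_lin : g =O[𝓝[≠] z₀] fun z => z - z₀ := by
    refine ((isBigO_refl (fun z => ((z - z₀) ^ k)⁻¹) _).smul (h.mono nhdsWithin_le_nhds)).congr'
      ?_ ?_ <;> filter_upwards [self_mem_nhdsWithin] with z hz
    · rw [smul_smul, inv_mul_cancel₀ (pow_ne_zero _ (sub_ne_zero.mpr hz)), one_smul]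
    · rw [smul_eq_mul, pow_succ, ← mul_assoc, inv_mul_cancel₀ (pow_ne_zero _ (sub_ne_zero.mpr hz)),
        one_mul]
  have h_sub : Tendsto (fun z => z - z₀) (𝓝[≠] z₀) (𝓝 0) :=
    (tendsto_sub_nhds_zero_iff.mpr tendsto_id).mono_left nhdsWithin_le_nhds
  exact tendsto_nhds_unique (hg.tendsto.mono_left nhdsWithin_le_nhds)
    (hg_lin.trans_tendsto h_sub)

lemma AnalyticAt.isBigO_pow_iff_natCast_le_analyticOrderAt (hf : AnalyticAt 𝕜 f z₀) :
    f =O[𝓝 z₀] (fun z => (z - z₀) ^ N) ↔ (N : ℕ∞) ≤ analyticOrderAt f z₀ := by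
  constructor
  · intro h
    by_contra! hlt
    obtain ⟨k, hk⟩ := ENat.ne_top_iff_exists.mp hlt.ne_top
    rw [← hk, Nat.cast_lt] at hlt
    obtain ⟨g, hg, hg0, hfg⟩ := hf.analyticOrderAt_eq_natCast.mp hk.symm
    exact hg0 (eq_zero_of_pow_smul_isBigO_pow_succ hg.continuousAt
      ((h.congr' hfg EventuallyEq.rfl).trans (isBigO_sub_pow_sub_pow_of_le hlt)))
  · intro h
    obtain ⟨g, hg, hfg⟩ := (natCast_le_analyticOrderAt hf).mp h
    have hfg' : f =ᶠ[𝓝 z₀] fun z => (z - z₀) ^ N • g z := hfg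
    refine ((isBigO_refl (fun z => (z - z₀) ^ N) _).smul
      (hg.continuousAt.isBigO_one 𝕜)).congr' hfg'.symm ?_
    simp

lemma AnalyticAt.eventually_eq_zero_of_forall_isBigO_pow (hf : AnalyticAt 𝕜 f z₀)
    (h : ∀ N : ℕ, f =O[𝓝 z₀] fun z => (z - z₀) ^ N) : ∀ᶠ z in 𝓝 z₀, f z = 0 :=
  analyticOrderAt_eq_top.mp <| ENat.eq_top_iff_forall_ge.mpr fun N =>
    hf.isBigO_pow_iff_natCast_le_analyticOrderAt.mp (h N)

lemma AnalyticAt.iteratedDeriv_eq_zero_of_isBigO_pow [CharZero 𝕜] [CompleteSpace E]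
    (hf : AnalyticAt 𝕜 f z₀) (h : f =O[𝓝 z₀] fun z => (z - z₀) ^ N) {i : ℕ} (hi : i < N) :
    iteratedDeriv i f z₀ = 0 :=
  (natCast_le_analyticOrderAt_iff_iteratedDeriv_eq_zero hf).mp
    (hf.isBigO_pow_iff_natCast_le_analyticOrderAt.mp h) i hi

end Order

lemma Complex.eq_zero_of_re_mul_pow_isBigO_pow_succ {a : ℂ} {k : ℕ} (hk : k ≠ 0)
    (h : (fun t : ℂ => (a * t ^ k).re) =O[𝓝 0] fun t => t ^ (k + 1)) : a = 0 := by
  -- along the ray `ε ↦ ε ζ` with `a ζ ^ k = ‖a‖²`, the real part is `‖a‖² ε ^ k`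
  obtain ⟨ζ, hζ⟩ := IsAlgClosed.exists_pow_nat_eq (starRingEnd ℂ a) (Nat.pos_of_ne_zero hk)
  have h_ray : Tendsto (fun ε : ℝ => (ε : ℂ) * ζ) (𝓝 0) (𝓝 0) :=
    (by fun_prop : Continuous fun ε : ℝ => (ε : ℂ) * ζ).tendsto' 0 0 (by simp)
  have h_pow : (fun ε : ℝ => ((ε : ℂ) * ζ) ^ (k + 1)) =O[𝓝 0] fun ε => ε ^ (k + 1) :=
    IsBigO.of_bound (‖ζ‖ ^ (k + 1)) <| Eventually.of_forall fun ε => by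
      simp [mul_pow, mul_comm]
  have h_norm : (fun ε : ℝ => (ε - 0) ^ k • Complex.normSq a) =O[𝓝 0]
      fun ε => (ε - 0) ^ (k + 1) := by
    refine ((h.comp_tendsto h_ray).trans h_pow).congr (fun ε => ?_) (fun ε => by simp)
    simp only [Function.comp_apply, mul_pow, hζ, sub_zero, smul_eq_mul]
    rw [mul_left_comm, Complex.mul_conj, ← Complex.ofReal_pow, ← Complex.ofReal_mul,
      Complex.ofReal_re, mul_comm]
  exact Complex.normSq_eq_zero.mp
    (eq_zero_of_pow_smul_isBigO_pow_succ (g := fun _ : ℝ => Complex.normSq a) continuousAt_const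
      h_norm)

lemma AnalyticAt.isBigO_pow_of_re_isBigO_pow {ψ : ℂ → ℂ} (hψ : AnalyticAt ℂ ψ 0) (hψ0 : ψ 0 = 0)
    {N : ℕ} (hre : (fun t => (ψ t).re) =O[𝓝 0] fun t => t ^ N) :
    ψ =O[𝓝 0] fun t => t ^ N := by
  have h_order := hψ.isBigO_pow_iff_natCast_le_analyticOrderAt (N := N)
  simp only [sub_zero] at h_order
  refine h_order.mpr (not_lt.mp fun hlt => ?_)
  obtain ⟨k, hk⟩ := ENat.ne_top_iff_exists.mp hlt.ne_top
  rw [← hk, Nat.cast_lt] at hlt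
  obtain ⟨g, hg, hg0, hψg⟩ := hψ.analyticOrderAt_eq_natCast.mp hk.symm
  simp only [sub_zero, smul_eq_mul] at hψg
  have hk0 : k ≠ 0 := by
    rintro rfl
    exact hg0 (by simpa [hψ0] using hψg.self_of_nhds.symm)
  -- `Re (g 0 t ^ k) = Re ψ t - Re (t ^ k (g t - g 0))`, both of order `k + 1`
  have h_main : (fun t => (ψ t).re) =O[𝓝 0] fun t => t ^ (k + 1) := by
    have h_pow := isBigO_sub_pow_sub_pow_of_le (z₀ := (0 : ℂ)) hlt
    simp only [sub_zero] at h_pow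
    exact hre.trans h_pow
  have h_rest : (fun t => (t ^ k * (g t - g 0)).re) =O[𝓝 0] fun t => t ^ (k + 1) := by
    refine (isBigO_of_le (g := fun t => t ^ k * (g t - g 0)) _ fun t => ?_).trans ?_
    · exact Complex.abs_re_le_norm _
    · simpa [pow_succ] using (isBigO_refl (fun t : ℂ => t ^ k) _).mul hg.differentiableAt.isBigO_sub
  refine hg0 (Complex.eq_zero_of_re_mul_pow_isBigO_pow_succ hk0 ?_)
  refine (h_main.sub h_rest).congr' ?_ EventuallyEq.rfl
  filter_upwards [hψg] with t ht
  rw [ht, ← Complex.sub_re]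
  congr 1
  ring

lemma AnalyticAt.exists_pow_eq {v : ℂ → ℂ} {z₀ : ℂ} (hv : AnalyticAt ℂ v z₀) (hv0 : v z₀ ≠ 0)
    {n : ℕ} (hn : n ≠ 0) :
    ∃ ρ : ℂ → ℂ, AnalyticAt ℂ ρ z₀ ∧ ρ z₀ ≠ 0 ∧ ∀ᶠ z in 𝓝 z₀, ρ z ^ n = v z := by
  have hnC : (n : ℂ) ≠ 0 := Nat.cast_ne_zero.mpr hn
  have h_exp_pow (w : ℂ) : Complex.exp (w / n) ^ n = Complex.exp w := by
    rw [← Complex.exp_nat_mul, mul_div_cancel₀ _ hnC]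
  -- `v z = v z₀ · (v z / v z₀)`, and `v z / v z₀` stays near `1`, where `log` is analytic
  refine ⟨fun z => Complex.exp (Complex.log (v z₀) / n) *
    Complex.exp (Complex.log (v z / v z₀) / n), ?_, by simp [hv0], ?_⟩
  · refine analyticAt_const.mul (analyticAt_cexp.comp ((AnalyticAt.comp (analyticAt_clog ?_)
      (hv.div analyticAt_const hv0)).div analyticAt_const hnC))
    simp [hv0, Complex.one_mem_slitPlane]
  · filter_upwards [hv.continuousAt.eventually_ne hv0] with z hz
    rw [mul_pow, h_exp_pow, h_exp_pow, Complex.exp_log hv0, Complex.exp_log (div_ne_zero hz hv0),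
      mul_div_cancel₀ _ hv0]

lemma AnalyticAt.exists_comp_eq_pow {g : ℂ → ℂ} (hg : AnalyticAt ℂ g 0) (hg0 : g 0 = 0)
    (hne : ¬ ∀ᶠ t in 𝓝 0, g t = 0) :
    ∃ n ≠ 0, ∃ w : ℂ → ℂ, AnalyticAt ℂ w 0 ∧ w 0 = 0 ∧ ∀ᶠ s in 𝓝 0, g (w s) = s ^ n := by
  obtain ⟨n, hn⟩ := ENat.ne_top_iff_exists.mp (mt analyticOrderAt_eq_top.mp hne)
  obtain ⟨v, hv, hv0, hgv⟩ := hg.analyticOrderAt_eq_natCast.mp hn.symm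
  have hn0 : n ≠ 0 := by
    rintro rfl
    exact hv0 (by simpa [hg0] using hgv.self_of_nhds.symm)
  obtain ⟨ρ, hρ, hρ0, hρv⟩ := hv.exists_pow_eq hv0 hn0
  -- `g = u ^ n` near `0` with `u t = t ρ t` a local coordinate; `w` is the inverse of `u`
  set u : ℂ → ℂ := fun t => t * ρ t
  have hu : AnalyticAt ℂ u 0 := analyticAt_id.mul hρ
  have hu0 : u 0 = 0 := by simp [u]
  have hu' : deriv u 0 ≠ 0 := by
    have hu_deriv : HasDerivAt u (ρ 0) 0 := by
      simpa using (hasDerivAt_id (0 : ℂ)).fun_mul hρ.differentiableAt.hasDerivAt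
    rwa [hu_deriv.deriv]
  set w := hu.hasStrictDerivAt.localInverse u _ _ hu'
  have hw : AnalyticAt ℂ w 0 := hu0 ▸ hu.analyticAt_localInverse hu'
  have hw0 : w 0 = 0 := by
    have h_image : w (u 0) = 0 := HasStrictFDerivAt.localInverse_apply_image ..
    rwa [hu0] at h_image
  have hw_tendsto : Tendsto w (𝓝 0) (𝓝 0) := by
    simpa [hw0] using hw.continuousAt.tendsto
  have hgu : ∀ᶠ t in 𝓝 0, g t = u t ^ n := by
    filter_upwards [hgv, hρv] with t hgt hρt
    simp [hgt, u, mul_pow, hρt]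
  refine ⟨n, hn0, w, hw, hw0, ?_⟩
  filter_upwards [hw_tendsto.eventually hgu, hu0 ▸ hu.hasStrictDerivAt.eventually_right_inverse hu']
    with s hgs hus
  rw [hgs, hus]

open Nat in
lemma iteratedDeriv_sum_mul_pow_mul_zero {𝕜 : Type*} [NontriviallyNormedField 𝕜] (c : ℕ → 𝕜)
    {n N k : ℕ} (hn : n ≠ 0) (hk : k < N) :
    iteratedDeriv (n * k) (fun s : 𝕜 => ∑ j ∈ Finset.range N, c j * s ^ (n * j)) 0 =
      c k * (n * k)! := by
  rw [iteratedDeriv_fun_sum fun j _ => by fun_prop]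
  simp only [iteratedDeriv_const_mul_field, iteratedDeriv_fun_pow_zero, mul_right_inj' hn]
  simp [hk]

lemma AnalyticAt.exists_pos_summable_norm_iteratedDeriv_div_factorial_mul_pow {f : ℂ → ℂ} {x : ℂ}
    (hf : AnalyticAt ℂ f x) :
    ∃ r : ℝ, 0 < r ∧ Summable fun i => ‖iteratedDeriv i f x / i.factorial‖ * r ^ i := by
  obtain ⟨r, hr0, hr⟩ := ENNReal.lt_iff_exists_nnreal_btwn.mp hf.hasFPowerSeriesAt.radius_pos
  refine ⟨r, by exact_mod_cast hr0, ?_⟩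
  simpa [FormalMultilinearSeries.ofScalars_norm] using
    FormalMultilinearSeries.summable_norm_mul_pow _ hr

lemma exists_summable_of_forall_isBigO_add_sum {T : ℂ → ℂ} (hT : AnalyticAt ℂ T 0) {c : ℕ → ℂ}
    {n : ℕ} (hn : n ≠ 0)
    (h : ∀ N : ℕ, (fun s => T s + ∑ j ∈ Finset.range N, c j * s ^ (n * j)) =O[𝓝 0]
      fun s => s ^ N) :
    ∃ z ≠ 0, Summable fun j => c j * z ^ j := by
  -- `T` is `-∑ c j s ^ (n j)` to infinite order, so `c` is a subsequence of its Taylor coefficients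
  have h_coeff (k : ℕ) : c k = -(iteratedDeriv (n * k) T 0 / (n * k).factorial) := by
    have hk : k < n * k + 1 := Nat.lt_succ_of_le (Nat.le_mul_of_pos_left k (Nat.pos_of_ne_zero hn))
    have h_poly : AnalyticAt ℂ (fun s => ∑ j ∈ Finset.range (n * k + 1), c j * s ^ (n * j)) 0 := by
      fun_prop
    have h_zero := (hT.fun_add h_poly).iteratedDeriv_eq_zero_of_isBigO_pow
      (by simpa using h (n * k + 1)) (Nat.lt_succ_self (n * k))
    rw [iteratedDeriv_fun_add hT.contDiffAt h_poly.contDiffAt,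
      iteratedDeriv_sum_mul_pow_mul_zero c hn hk] at h_zero
    rw [← neg_div, eq_div_iff (Nat.cast_ne_zero.mpr (Nat.factorial_ne_zero _))]
    linear_combination h_zero
  obtain ⟨r, hr, h_sum⟩ := hT.exists_pos_summable_norm_iteratedDeriv_div_factorial_mul_pow
  refine ⟨(r : ℂ) ^ n, pow_ne_zero _ (Complex.ofReal_ne_zero.mpr hr.ne'), .of_norm ?_⟩
  refine (h_sum.comp_injective (mul_right_injective₀ hn)).congr fun k => ?_
  simp [h_coeff k, pow_mul, abs_of_pos hr]

lemma FormalMultilinearSeries.hasFPowerSeriesAt_ofScalarsSum_of_summable {𝕜 : Type*}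
    [NontriviallyNormedField 𝕜] [CompleteSpace 𝕜] {c : ℕ → 𝕜} {z : 𝕜} (hz : z ≠ 0)
    (h : Summable fun j => c j * z ^ j) :
    HasFPowerSeriesAt (ofScalarsSum c) (ofScalars 𝕜 c) 0 := by
  have h_radius : (‖z‖₊ : ENNReal) ≤ (ofScalars 𝕜 c).radius :=
    (ofScalars 𝕜 c).le_radius_of_tendsto (l := 0) <| by
      simpa [ofScalars_norm] using h.tendsto_atTop_zero.norm
  exact ((ofScalars 𝕜 c).hasFPowerSeriesOnBall
    ((ENNReal.coe_pos.mpr (nnnorm_pos.mpr hz)).trans_le h_radius)).hasFPowerSeriesAt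

section TangentCurves

variable {F : ℂ → ℝ} {c : ℕ → ℂ}

lemma sum_range_mul_zero_pow (hc0 : c 0 = 0) (N : ℕ) : ∑ j ∈ Finset.range N, c j * 0 ^ j = 0 :=
  Finset.sum_eq_zero fun j _ => by rcases j with _ | j <;> simp [hc0]

lemma isBigO_two_mul_re_neg_add_of_hasFPowerSeriesAt
    (hTaylor : ∀ N : ℕ, (fun z : ℂ => F z - ∑ j ∈ Finset.range N, 2 * (c j * z ^ j).re)
      =O[𝓝 0] fun z => z ^ N)
    {S : ℂ → ℂ} (hS : HasFPowerSeriesAt S (FormalMultilinearSeries.ofScalars ℂ c) 0) (N : ℕ) :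
    (fun t => 2 * (-S t).re + F t) =O[𝓝 0] fun t => t ^ N := by
  have h_rem : (fun t => S t - ∑ j ∈ Finset.range N, c j * t ^ j) =O[𝓝 0] fun t => t ^ N := by
    refine (hS.isBigO_sub_partialSum_pow N).congr_left (fun t => ?_) |>.trans
      (isBigO_of_le _ fun t => by simp)
    simp [FormalMultilinearSeries.partialSum, mul_comm]
  have h_rem_re : (fun t => (S t - ∑ j ∈ Finset.range N, c j * t ^ j).re) =O[𝓝 0]
      fun t => t ^ N :=
    (isBigO_of_le _ fun t => Complex.abs_re_le_norm _).trans h_rem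
  refine ((hTaylor N).sub (h_rem_re.const_mul_left 2)).congr (fun t => ?_) fun _ => rfl
  simp only [← Finset.mul_sum, Complex.neg_re, Complex.sub_re, Complex.re_sum]
  ring

lemma isBigO_add_sum_mul_pow_of_tangent (hc0 : c 0 = 0)
    (hTaylor : ∀ N : ℕ, (fun z : ℂ => F z - ∑ j ∈ Finset.range N, 2 * (c j * z ^ j).re)
      =O[𝓝 0] fun z => z ^ N)
    {g h : ℂ → ℂ} (hg : AnalyticAt ℂ g 0) (hh : AnalyticAt ℂ h 0) (hg0 : g 0 = 0) (hh0 : h 0 = 0)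
    (htan : ∀ N : ℕ, (fun t => 2 * (h t).re + F (g t)) =O[𝓝 0] fun t : ℂ => t ^ N) (N : ℕ) :
    (fun t => h t + ∑ j ∈ Finset.range N, c j * g t ^ j) =O[𝓝 0] fun t => t ^ N := by
  refine AnalyticAt.isBigO_pow_of_re_isBigO_pow (by fun_prop)
    (by simp [hh0, hg0, sum_range_mul_zero_pow hc0]) ?_
  have hg_lin : g =O[𝓝 0] fun t => t := by simpa [hg0] using hg.differentiableAt.isBigO_sub
  have hg_tendsto : Tendsto g (𝓝 0) (𝓝 0) := by simpa [hg0] using hg.continuousAt.tendsto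
  have h_taylor_g := ((hTaylor N).comp_tendsto hg_tendsto).trans (hg_lin.pow N)
  refine (((htan N).sub h_taylor_g).const_mul_left (1 / 2)).congr (fun t => ?_) fun _ => rfl
  simp only [Function.comp_apply, ← Finset.mul_sum, Complex.add_re, Complex.re_sum]
  ring

lemma exists_summable_of_tangent_curve (hc0 : c 0 = 0)
    (hTaylor : ∀ N : ℕ, (fun z : ℂ => F z - ∑ j ∈ Finset.range N, 2 * (c j * z ^ j).re)
      =O[𝓝 0] fun z => z ^ N)
    {γ : ℂ → ℂ × ℂ} (hγ : AnalyticAt ℂ γ 0) (hγ0 : γ 0 = 0) (hne : ¬ ∀ᶠ t in 𝓝 0, γ t = 0)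
    (htan : ∀ N : ℕ, (fun t => 2 * (γ t).2.re + F (γ t).1) =O[𝓝 0] fun t : ℂ => t ^ N) :
    ∃ z ≠ 0, Summable fun j => c j * z ^ j := by
  have hg : AnalyticAt ℂ (fun t => (γ t).1) 0 := analyticAt_fst.comp hγ
  have hh : AnalyticAt ℂ (fun t => (γ t).2) 0 := analyticAt_snd.comp hγ
  have hP := isBigO_add_sum_mul_pow_of_tangent hc0 hTaylor hg hh (by simp [hγ0]) (by simp [hγ0])
    htan
  by_cases hg_flat : ∀ᶠ t in 𝓝 0, (γ t).1 = 0
  · refine absurd ?_ hne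
    have hh_flat : ∀ᶠ t in 𝓝 0, (γ t).2 = 0 := by
      refine hh.eventually_eq_zero_of_forall_isBigO_pow fun N => ?_
      refine (hP N).congr' ?_ (by simp)
      filter_upwards [hg_flat] with t ht
      simp [ht, sum_range_mul_zero_pow hc0]
    filter_upwards [hg_flat, hh_flat] with t h1 h2 using Prod.ext h1 h2
  · obtain ⟨n, hn, w, hw, hw0, hgw⟩ := hg.exists_comp_eq_pow (by simp [hγ0]) hg_flat
    have hw_lin : w =O[𝓝 0] fun s => s := by simpa [hw0] using hw.differentiableAt.isBigO_sub
    have hw_tendsto : Tendsto w (𝓝 0) (𝓝 0) := by simpa [hw0] using hw.continuousAt.tendsto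
    refine exists_summable_of_forall_isBigO_add_sum (hh.comp_of_eq hw hw0) hn fun N => ?_
    refine (((hP N).comp_tendsto hw_tendsto).trans (hw_lin.pow N)).congr' ?_ EventuallyEq.rfl
    filter_upwards [hgw] with s hs
    simp [hs, pow_mul]

end TangentCurves

theorem statement8_general (F : ℂ → ℝ)
    (c : ℕ → ℂ) (hc0 : c 0 = 0)
    (hTaylor : ∀ N : ℕ,
      (fun z : ℂ => F z - ∑ j ∈ Finset.range N, 2 * (c j * z ^ j).re)
        =O[𝓝 0] fun z => z ^ N) :
    (¬ ∃ γ : ℂ → ℂ × ℂ, AnalyticAt ℂ γ 0 ∧ γ 0 = 0 ∧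
        ¬ (∀ᶠ t in 𝓝 (0 : ℂ), γ t = 0) ∧ (∃ U ∈ 𝓝 (0 : ℂ), Set.InjOn γ U) ∧
        ∀ N : ℕ, (fun t => 2 * (γ t).2.re + F (γ t).1) =O[𝓝 0] fun t : ℂ => t ^ N)
      ↔ ∀ z : ℂ, z ≠ 0 → ¬ Summable fun j => c j * z ^ j := by
  constructor
  · intro h_no_curve z hz h_sum
    have hS := FormalMultilinearSeries.hasFPowerSeriesAt_ofScalarsSum_of_summable hz h_sum
    refine h_no_curve ⟨fun t => (t, -FormalMultilinearSeries.ofScalarsSum c t),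
      analyticAt_id.prod hS.analyticAt.neg, by simp [hc0], fun h_flat => ?_,
      ⟨Set.univ, univ_mem, fun a _ b _ hab => congrArg Prod.fst hab⟩,
      isBigO_two_mul_re_neg_add_of_hasFPowerSeriesAt hTaylor hS⟩
    obtain ⟨t, ht, ht0⟩ := ((h_flat.filter_mono nhdsWithin_le_nhds).and
      (self_mem_nhdsWithin (s := {(0 : ℂ)}ᶜ))).exists
    exact ht0 (congrArg Prod.fst ht)
  · rintro h_divergent ⟨γ, hγ, hγ0, hne, -, htan⟩
    obtain ⟨z, hz, h_sum⟩ := exists_summable_of_tangent_curve hc0 hTaylor hγ hγ0 hne htan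
    exact h_divergent z hz h_sum

/-- Let `M ⊆ ℂ²` be defined by `2 Re w + F(z,z̄) = 0` with
`Δ₁(M,0) = ∞` and associated formal series `S(z) = ∑_{j≥2} c_j z^j` from the pure-terms
Taylor expansion of `F`.  Then: there is no nonconstant holomorphic curve (with good,
i.e. injective, parametrization) tangent to `M` at `0` to infinite order if and only if
the radius of convergence of `S` equals `0`. -/
theorem statement8 (F : ℂ → ℝ)
    (hF : ContDiff ℝ (⊤ : ℕ∞) F) (hF0 : F 0 = 0) (hdF : fderiv ℝ F 0 = 0)
    (hΔ : DAngeloTypeInfinite (fun q : ℂ × ℂ => 2 * q.2.re + F q.1) 0)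
    (c : ℕ → ℂ) (hc0 : c 0 = 0) (hc1 : c 1 = 0)
    (hTaylor : ∀ N : ℕ,
      (fun z : ℂ => F z - ∑ j ∈ Finset.range N, 2 * (c j * z ^ j).re)
        =O[𝓝 0] fun z => z ^ N) :
    (¬ ∃ γ : ℂ → ℂ × ℂ, AnalyticAt ℂ γ 0 ∧ γ 0 = 0 ∧
        ¬ (∀ᶠ t in 𝓝 (0 : ℂ), γ t = 0) ∧ (∃ U ∈ 𝓝 (0 : ℂ), Set.InjOn γ U) ∧
        ∀ N : ℕ, (fun t => 2 * (γ t).2.re + F (γ t).1) =O[𝓝 0] fun t : ℂ => t ^ N)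
      ↔ ∀ z : ℂ, z ≠ 0 → ¬ Summable fun j => c j * z ^ j :=
  statement8_general F c hc0 hTaylor
end
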